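/- Let n ≥ 3 be odd and let S² be the unit sphere in ℝ³. The action of the dihedral group D_n on the cyclic configuration space G(S²,n) by permutation of coordinates is free if and only if n is prime. -/

import Mathlib

/-!
For prime `n`, a rotation `i ↦ i + a` with `a ≠ 0` generates `ZMod n`, so a configuration fixed
by it is constant, which no cyclic configuration is. For odd `n`, every reflection `i ↦ a - i`
swaps two neighbours `j` and `j + 1`, so a fixed configuration has `x j = x (j + 1)`. Conversely,
if `n` has a proper divisor `1 < d < n`, colouring `i` by `i mod d` with `d` distinct points of
the (infinite) sphere gives a cyclic configuration fixed by the rotation by `d`.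
-/

open Metric

theorem Metric.sphere_infinite {E : Type*} [NormedAddCommGroup E] [NormedSpace ℝ E]
    (hE : 1 < Module.rank ℝ E) (x : E) {r : ℝ} (hr : 0 < r) : (sphere x r).Infinite := by
  have : Nontrivial E := rank_pos_iff_nontrivial.mp (zero_lt_one.trans hE)
  obtain ⟨v, hv⟩ := exists_norm_eq E hr.le
  refine (isConnected_sphere hE x hr.le).isPreconnected.infinite_of_nontrivial
    ⟨x + v, by simp [hv], x - v, by simp [hv], fun h => ?_⟩
  rw [sub_eq_add_neg, add_right_inj, eq_neg_iff_add_eq_zero, ← two_smul ℝ, smul_eq_zero] at h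
  simp [h.resolve_left two_ne_zero, hr.ne] at hv

namespace ZMod

theorem eq_of_periodic {p : ℕ} [Fact p.Prime] {α : Type*} {x : ZMod p → α} {a : ZMod p}
    (ha : a ≠ 0) (hx : Function.Periodic x a) (i j : ZMod p) : x i = x j := by
  have := hx.nat_mul ((i - j) / a).val j
  rwa [natCast_val, cast_id, div_mul_cancel₀ _ ha, add_sub_cancel] at this

theorem exists_sub_eq_add_one_of_odd {n : ℕ} (hn : Odd n) (a : ZMod n) :
    ∃ j : ZMod n, a - j = j + 1 := by
  obtain ⟨k, rfl⟩ := hn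
  have h : (2 * k + 1 : ZMod (2 * k + 1)) = 0 := by exact_mod_cast natCast_self _
  exact ⟨(a - 1) * (k + 1), by linear_combination (1 - a) * h⟩

theorem exists_periodic_ne_add_one {n d : ℕ} (hdvd : d ∣ n) (hd : 1 < d) {α : Type*}
    {s : Set α} (hs : s.Infinite) :
    ∃ x : ZMod n → α, (∀ i, x i ∈ s) ∧ Function.Periodic x d ∧ ∀ i, x i ≠ x (i + 1) := by
  have : Fact (1 < d) := ⟨hd⟩
  let f := castHom hdvd (ZMod d)
  refine ⟨fun i => hs.natEmbedding s (f i).val, fun i => Subtype.coe_prop _,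
    fun i => by simp [map_natCast], fun i h => ?_⟩
  have h' : f i = f (i + 1) :=
    val_injective d ((hs.natEmbedding s).injective (Subtype.val_injective h))
  simp at h'

end ZMod

/-- For odd `n ≥ 3`, the action of the dihedral group `Dₙ` on the cyclic
configuration space `G(S²,n)` of the unit sphere in `ℝ³` by permutation of coordinates
(`(τ • x) i = x (τ⁻¹ i)`, where the rotation `r a` acts on `ZMod n` by `i ↦ i + a` and the
reflection `sr a` by `i ↦ a - i`) is free if and only if `n` is prime. -/
theorem stmt4 (n : ℕ) (hn : 3 ≤ n) (hodd : Odd n)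
    (G : Set (ZMod n → EuclideanSpace ℝ (Fin 3)))
    (hG : G = {x | (∀ i, ‖x i‖ = 1) ∧ ∀ i : ZMod n, x i ≠ x (i + 1)})
    (act : DihedralGroup n → (ZMod n → EuclideanSpace ℝ (Fin 3)) →
      (ZMod n → EuclideanSpace ℝ (Fin 3)))
    (hr : ∀ a x i, act (DihedralGroup.r a) x i = x (i - a))
    (hsr : ∀ a x i, act (DihedralGroup.sr a) x i = x (a - i)) :
    (∀ g : DihedralGroup n, (∃ x ∈ G, act g x = x) → g = 1) ↔ n.Prime := by
  subst hG
  constructor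
  · intro hfree
    by_contra hnp
    obtain ⟨d, hdvd, hd1, hdn⟩ := Nat.exists_dvd_of_not_prime2 (by omega) hnp
    have hE : 1 < Module.rank ℝ (EuclideanSpace ℝ (Fin 3)) := by
      rw [← Module.finrank_eq_rank, finrank_euclideanSpace_fin]; norm_num
    obtain ⟨x, hx_sphere, hx_per, hx_ne⟩ :=
      ZMod.exists_periodic_ne_add_one hdvd hd1 (Metric.sphere_infinite hE 0 one_pos)
    have hfix : act (.r d) x = x := funext fun i => by rw [hr, ← hx_per, sub_add_cancel]
    have hd0 := hfree _ ⟨x, ⟨fun i => by simpa using hx_sphere i, hx_ne⟩, hfix⟩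
    rw [DihedralGroup.one_def, DihedralGroup.r.injEq, ZMod.natCast_eq_zero_iff] at hd0
    exact absurd (Nat.le_of_dvd (by omega) hd0) (by omega)
  · intro hp
    have : Fact n.Prime := ⟨hp⟩
    rintro (a | a) ⟨x, ⟨-, hx_ne⟩, hfix⟩
    · by_contra ha
      have ha0 : -a ≠ 0 := neg_ne_zero.mpr fun h => ha (h ▸ DihedralGroup.one_def.symm)
      have hper : Function.Periodic x (-a) := fun i => by rw [← sub_eq_add_neg, ← hr a x i, hfix]
      exact hx_ne 0 (ZMod.eq_of_periodic ha0 hper _ _)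
    · obtain ⟨j, hj⟩ := ZMod.exists_sub_eq_add_one_of_odd hodd a
      exact (hx_ne j (by rw [← hj, ← hsr a x j, hfix])).elim
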